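/- Let X be a topological space with base point x₀ and let X₁,…,X_n be pointed spaces with X = X₁ × ⋯ × X_n. For 0 ≤ j ≤ n let S_j ⊆ X be the subset of tuples having at least j coordinates equal to the base point. Then S_n ⊆ S_{n−1} ⊆ ⋯ ⊆ S₀ = X is a filtration by closed subsets (when each base point is closed), S_n is the single point (x₀,…,x₀), and for each 1 ≤ r ≤ n the quotient S_{n−r}/S_{n−r+1} is homeomorphic to the wedge over all subsets 𝔪 = {m₁ < ⋯ < m_r} ⊆ {1,…,n} of the smash-type quotients (X_{m₁} × ⋯ × X_{m_r}) / S₁(𝔪), where S₁(𝔪) is the subset of tuples with at least one coordinate equal to the base point. -/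

import Mathlib

/-- The relation collapsing a subset `B` of `Z` to a single point. -/
def collapseRel {Z : Type*} (B : Set Z) : Z → Z → Prop :=
  fun a b => a = b ∨ (a ∈ B ∧ b ∈ B)

/-- The quotient space `Z/B` obtained by collapsing `B ⊆ Z` to a point. -/
def Collapse {Z : Type*} (B : Set Z) : Type _ := Quot (collapseRel B)

instance {Z : Type*} [TopologicalSpace Z] (B : Set Z) : TopologicalSpace (Collapse B) :=
  inferInstanceAs (TopologicalSpace (Quot (collapseRel B)))

/-! The stage `S_{n-r}` consists of the tuples with at most `r` coordinates off the base point,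
and `S_{n-r+1}` of those with fewer. A tuple of `S_{n-r}` is sent to the summand of an `r`-set `𝔪`
containing its support, as its restriction to `𝔪`; when the support is smaller than `r` this
restriction lies in the fat wedge of `𝔪`, so the choice of `𝔪` does not matter. Conversely a tuple
over `𝔪` is extended by base points. The forward map is continuous although it jumps between
summands: restricting a tuple to an `r`-set other than its support already lands in the fat wedge of
that set, so each of the finitely many continuous maps "restrict to `𝔪`" agrees with the forward
map or is the base point, and the preimage of an open set is the intersection or the union of
their preimages. -/

open Finset Function

namespace Collapse

variable {Z W : Type*} {B : Set Z}

def mk (B : Set Z) (z : Z) : Collapse B := Quot.mk _ z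

theorem mk_eq_mk {a b : Z} (ha : a ∈ B) (hb : b ∈ B) : mk B a = mk B b :=
  Quot.sound (Or.inr ⟨ha, hb⟩)

@[elab_as_elim]
theorem ind {p : Collapse B → Prop} (h : ∀ z, p (mk B z)) (q : Collapse B) : p q :=
  Quot.ind h q

def lift (f : Z → W) (hf : ∀ a ∈ B, ∀ b ∈ B, f a = f b) : Collapse B → W :=
  Quot.lift f (by rintro a b (rfl | ⟨ha, hb⟩); exacts [rfl, hf a ha b hb])

@[simp]
theorem lift_mk (f : Z → W) (hf : ∀ a ∈ B, ∀ b ∈ B, f a = f b) (z : Z) :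
    lift f hf (mk B z) = f z :=
  rfl

variable [TopologicalSpace Z] [TopologicalSpace W]

theorem continuous_mk : Continuous (mk B) :=
  continuous_quot_mk

theorem continuous_lift {f : Z → W} {hf : ∀ a ∈ B, ∀ b ∈ B, f a = f b} (h : Continuous f) :
    Continuous (lift f hf) :=
  continuous_quot_lift _ h

end Collapse

abbrev Wedge {κ : Type*} {Y : κ → Type*} (b : ∀ k, Y k) : Type _ :=
  Collapse {p : Σ k, Y k | p.2 = b p.1}

namespace Wedge

variable {κ W : Type*} {Y : κ → Type*} {b : ∀ k, Y k}

def ι (b : ∀ k, Y k) (k : κ) (y : Y k) : Wedge b :=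
  Collapse.mk _ ⟨k, y⟩

theorem ι_basepoint (k k' : κ) : ι b k (b k) = ι b k' (b k') :=
  Collapse.mk_eq_mk rfl rfl

@[elab_as_elim]
theorem ind {p : Wedge b → Prop} (h : ∀ k y, p (ι b k y)) (q : Wedge b) : p q :=
  Collapse.ind (fun z => h z.1 z.2) q

def desc (g : ∀ k, Y k → W) (hg : ∀ k k', g k (b k) = g k' (b k')) : Wedge b → W :=
  Collapse.lift (fun p => g p.1 p.2) <| by
    rintro ⟨k, y⟩ (rfl : y = b k) ⟨k', y'⟩ (rfl : y' = b k')
    exact hg k k'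

@[simp]
theorem desc_ι (g : ∀ k, Y k → W) (hg : ∀ k k', g k (b k) = g k' (b k')) (k : κ) (y : Y k) :
    desc g hg (ι b k y) = g k y :=
  rfl

variable [∀ k, TopologicalSpace (Y k)] [TopologicalSpace W]

theorem continuous_ι (k : κ) : Continuous (ι b k) :=
  Collapse.continuous_mk.comp continuous_sigmaMk

theorem continuous_desc {g : ∀ k, Y k → W} {hg : ∀ k k', g k (b k) = g k' (b k')}
    (h : ∀ k, Continuous (g k)) : Continuous (desc g hg) :=
  Collapse.continuous_lift (continuous_sigma h)

end Wedge

def fatWedge {κ : Type*} {Y : κ → Type*} (b : ∀ k, Y k) : Set (∀ k, Y k) :=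
  {y | ∃ k, y k = b k}

abbrev Smash {κ : Type*} {Y : κ → Type*} (b : ∀ k, Y k) : Type _ :=
  Collapse (fatWedge b)

namespace Smash

variable {κ : Type*} {Y : κ → Type*}

def basepoint (b : ∀ k, Y k) : Smash b :=
  Collapse.mk _ b

theorem mk_eq_basepoint {b y : ∀ k, Y k} (hy : y ∈ fatWedge b) :
    Collapse.mk _ y = basepoint b :=
  let ⟨k, _⟩ := hy
  Collapse.mk_eq_mk hy ⟨k, rfl⟩

end Smash

theorem continuous_of_forall_eq_or_eq_const {ι Z W : Type*} [Finite ι] [TopologicalSpace Z]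
    [TopologicalSpace W] {f : ι → Z → W} {F : Z → W} (w₀ : W) (hf : ∀ i, Continuous (f i))
    (hF : ∀ z, ∃ i, F z = f i z) (hfF : ∀ z i, f i z = F z ∨ f i z = w₀) : Continuous F := by
  refine continuous_def.2 fun V hV => ?_
  by_cases hw₀ : w₀ ∈ V
  · have : F ⁻¹' V = ⋂ i, f i ⁻¹' V := by
      ext z
      simp only [Set.mem_preimage, Set.mem_iInter]
      refine ⟨fun hz i => ?_, fun hz => ?_⟩
      · rcases hfF z i with h | h <;> rw [h] <;> assumption
      · obtain ⟨i, hi⟩ := hF z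
        exact hi ▸ hz i
    exact this ▸ isOpen_iInter_of_finite fun i => hV.preimage (hf i)
  · have : F ⁻¹' V = ⋃ i, f i ⁻¹' V := by
      ext z
      simp only [Set.mem_preimage, Set.mem_iUnion]
      refine ⟨fun hz => ?_, fun ⟨i, hi⟩ => ?_⟩
      · obtain ⟨i, hi⟩ := hF z
        exact ⟨i, hi ▸ hz⟩
      · rcases hfF z i with h | h
        · exact h ▸ hi
        · exact absurd (h ▸ hi) hw₀
    exact this ▸ isOpen_iUnion fun i => hV.preimage (hf i)

theorem continuous_updateFinset {ι : Type*} [DecidableEq ι] {X : ι → Type*}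
    [∀ i, TopologicalSpace (X i)] (x : ∀ i, X i) (s : Finset ι) :
    Continuous (updateFinset x s) :=
  continuous_pi fun i => by by_cases hi : i ∈ s <;> simp [updateFinset, hi] <;> fun_prop

namespace FatWedgeFiltration

variable {ι : Type*} {X : ι → Type*}

def stage (x₀ : ∀ i, X i) (j : ℕ) : Set (∀ i, X i) :=
  {x | j ≤ Nat.card {i // x i = x₀ i}}

theorem stage_antitone (x₀ : ∀ i, X i) : Antitone (stage x₀) :=
  fun _ _ hjk _ hx => hjk.trans hx

section Summand

variable (x₀ : ∀ i, X i) (r : ℕ)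

abbrev SmashWedge : Type _ :=
  Wedge fun 𝔪 : {s : Finset ι // #s = r} => Smash.basepoint (𝔪.1.restrict x₀)

def toSummand (𝔪 : {s : Finset ι // #s = r}) (x : ∀ i, X i) : SmashWedge x₀ r :=
  Wedge.ι _ 𝔪 (Collapse.mk _ (𝔪.1.restrict x))

variable {x₀ r}

theorem toSummand_eq_basepoint {x : ∀ i, X i} {𝔪 : {s : Finset ι // #s = r}}
    (h : ∃ i ∈ 𝔪.1, x i = x₀ i) (𝔪' : {s : Finset ι // #s = r}) :
    toSummand x₀ r 𝔪 x = Wedge.ι _ 𝔪' (Smash.basepoint (𝔪'.1.restrict x₀)) := by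
  obtain ⟨i, hi, hx⟩ := h
  rw [toSummand, Smash.mk_eq_basepoint ⟨⟨i, hi⟩, hx⟩]
  exact Wedge.ι_basepoint _ _

theorem continuous_toSummand [∀ i, TopologicalSpace (X i)] (𝔪 : {s : Finset ι // #s = r}) : Continuous (toSummand x₀ r 𝔪) :=
  (Wedge.continuous_ι _).comp (Collapse.continuous_mk.comp (Finset.continuous_restrict _))

end Summand

variable [Fintype ι] {x₀ x : ∀ i, X i} {j r : ℕ}

open Classical in
noncomputable def support (x₀ x : ∀ i, X i) : Finset ι :=
  {i | x i ≠ x₀ i}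

theorem mem_support {i : ι} : i ∈ support x₀ x ↔ x i ≠ x₀ i := by
  simp [support]

theorem support_eq_empty_iff : support x₀ x = ∅ ↔ x = x₀ := by
  simp [Finset.eq_empty_iff_forall_notMem, mem_support, funext_iff]

open Classical in
theorem natCard_base_eq : Nat.card {i // x i = x₀ i} = #{i | x i = x₀ i} := by
  rw [Nat.card_eq_fintype_card, Fintype.card_subtype]

theorem natCard_base_add_card_support :
    Nat.card {i // x i = x₀ i} + #(support x₀ x) = Fintype.card ι := by
  classical
  rw [natCard_base_eq, support, ← card_univ]
  exact card_filter_add_card_filter_not (s := univ) (fun i => x i = x₀ i)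

theorem mem_stage_iff : x ∈ stage x₀ j ↔ j + #(support x₀ x) ≤ Fintype.card ι := by
  have := natCard_base_add_card_support (x₀ := x₀) (x := x)
  simp only [stage, Set.mem_ofPred_eq]
  omega

theorem mem_stage_iff_card_support_le (hj : j + r = Fintype.card ι) :
    x ∈ stage x₀ j ↔ #(support x₀ x) ≤ r := by
  rw [mem_stage_iff]
  omega

theorem mem_stage_add_one_iff_card_support_lt (hj : j + r = Fintype.card ι) :
    x ∈ stage x₀ (j + 1) ↔ #(support x₀ x) < r := by
  rw [mem_stage_iff]
  omega

theorem stage_card (x₀ : ∀ i, X i) : stage x₀ (Fintype.card ι) = {x₀} := by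
  ext x
  rw [mem_stage_iff, Set.mem_singleton_iff, ← support_eq_empty_iff, ← card_eq_zero]
  omega

theorem stage_eq_biUnion (x₀ : ∀ i, X i) (j : ℕ) :
    stage x₀ j = ⋃ s ∈ {s : Finset ι | j ≤ #s}, ⋂ i ∈ s, {x | x i = x₀ i} := by
  classical
  ext x
  simp only [stage, natCard_base_eq, Set.mem_ofPred_eq, Set.mem_iUnion, Set.mem_iInter,
    exists_prop]
  refine ⟨fun h => ⟨_, h, fun i hi => (mem_filter.1 hi).2⟩, fun ⟨s, hs, hx⟩ => ?_⟩
  exact hs.trans (card_le_card fun i hi => mem_filter.2 ⟨mem_univ i, hx i hi⟩)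

theorem isClosed_stage [∀ i, TopologicalSpace (X i)] (h : ∀ i, IsClosed {x₀ i}) (j : ℕ) :
    IsClosed (stage x₀ j) := by
  rw [stage_eq_biUnion]
  exact (Set.toFinite _).isClosed_biUnion fun s _ =>
    isClosed_biInter fun i _ => (h i).preimage (continuous_apply i)

theorem exists_mem_eq_of_card_support_lt {s : Finset ι} (h : #(support x₀ x) < #s) :
    ∃ i ∈ s, x i = x₀ i := by
  by_contra! hs
  exact h.not_ge (card_le_card fun i hi => mem_support.2 (hs i hi))

variable (x₀ j) in
abbrev StageQuotient : Type _ :=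
  Collapse {y : stage x₀ j | ↑y ∈ stage x₀ (j + 1)}

noncomputable def supersetOfCard (hj : j + r = Fintype.card ι) (x : stage x₀ j) :
    {s : Finset ι // #s = r} :=
  let h := exists_superset_card_eq ((mem_stage_iff_card_support_le hj).1 x.2) (hj ▸ le_add_self)
  ⟨h.choose, h.choose_spec.2⟩

theorem support_subset_supersetOfCard (hj : j + r = Fintype.card ι) (x : stage x₀ j) :
    support x₀ x.1 ⊆ (supersetOfCard hj x).1 :=
  (exists_superset_card_eq ((mem_stage_iff_card_support_le hj).1 x.2)
    (hj ▸ le_add_self)).choose_spec.1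

noncomputable def toWedge (hj : j + r = Fintype.card ι) (x : stage x₀ j) : SmashWedge x₀ r :=
  toSummand x₀ r (supersetOfCard hj x) x

theorem toWedge_eq_basepoint (hj : j + r = Fintype.card ι) {x : stage x₀ j}
    (hx : #(support x₀ x.1) < r) (𝔪 : {s : Finset ι // #s = r}) :
    toWedge hj x = Wedge.ι _ 𝔪 (Smash.basepoint (𝔪.1.restrict x₀)) :=
  toSummand_eq_basepoint
    (exists_mem_eq_of_card_support_lt (hx.trans_eq (supersetOfCard hj x).2.symm)) 𝔪

theorem toWedge_eq_toSummand (hj : j + r = Fintype.card ι) {x : stage x₀ j}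
    {𝔪 : {s : Finset ι // #s = r}} (h : support x₀ x.1 ⊆ 𝔪.1) :
    toWedge hj x = toSummand x₀ r 𝔪 x := by
  obtain hlt | heq := ((mem_stage_iff_card_support_le hj).1 x.2).lt_or_eq
  · rw [toWedge_eq_basepoint hj hlt 𝔪,
      toSummand_eq_basepoint (exists_mem_eq_of_card_support_lt (hlt.trans_eq 𝔪.2.symm))]
  · have hunique : ∀ 𝔪' : {s : Finset ι // #s = r}, support x₀ x.1 ⊆ 𝔪'.1 → ⟨_, heq⟩ = 𝔪' :=
      fun 𝔪' h' => Subtype.ext (eq_of_subset_of_card_le h' (𝔪'.2.trans heq.symm).le)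
    rw [toWedge, ← hunique _ (support_subset_supersetOfCard hj x), ← hunique _ h]

theorem continuous_toWedge [∀ i, TopologicalSpace (X i)] (hj : j + r = Fintype.card ι) :
    Continuous (toWedge (x₀ := x₀) hj) := by
  obtain ⟨𝔪₀, -, h𝔪₀⟩ := exists_subset_card_eq (s := univ) (card_univ (α := ι) ▸ hj ▸ le_add_self)
  refine continuous_of_forall_eq_or_eq_const (F := toWedge hj)
    (f := fun 𝔪 (x : stage x₀ j) => toSummand x₀ r 𝔪 x.1)
    (Wedge.ι _ ⟨𝔪₀, h𝔪₀⟩ (Smash.basepoint _))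
    (fun 𝔪 => (continuous_toSummand 𝔪).comp continuous_subtype_val) (fun x => ⟨_, rfl⟩)
    fun x 𝔪 => ?_
  by_cases h : ∃ i ∈ 𝔪.1, x.1 i = x₀ i
  · exact .inr (toSummand_eq_basepoint h _)
  · push Not at h
    have hsub : 𝔪.1 ⊆ support x₀ x.1 := fun i hi => mem_support.2 (h i hi)
    have heq := eq_of_subset_of_card_le hsub
      (((mem_stage_iff_card_support_le hj).1 x.2).trans_eq 𝔪.2.symm)
    exact .inl (toWedge_eq_toSummand hj heq.ge).symm

variable [DecidableEq ι]

theorem support_updateFinset_subset (s : Finset ι) (y : ∀ i : s, X i) :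
    support x₀ (updateFinset x₀ s y) ⊆ s := fun i hi => by
  by_contra his
  exact mem_support.1 hi (by simp [updateFinset, his])

theorem updateFinset_restrict_of_support_subset {s : Finset ι} (h : support x₀ x ⊆ s) :
    updateFinset x₀ s (s.restrict x) = x := by
  funext i
  by_cases his : i ∈ s
  · simp [updateFinset, his]
  · have hx : x i = x₀ i := by_contra fun hi => his (h (mem_support.2 hi))
    simp [updateFinset, his, hx]

theorem card_support_updateFinset_lt {s : Finset ι} {y : ∀ i : s, X i}
    (hy : y ∈ fatWedge (s.restrict x₀)) : #(support x₀ (updateFinset x₀ s y)) < #s := by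
  obtain ⟨i, hi⟩ := hy
  refine card_lt_card ((support_updateFinset_subset s y).ssubset_of_not_subset fun h => ?_)
  exact mem_support.1 (h i.2) (by simpa [updateFinset] using hi)

theorem updateFinset_mem_stage (hj : j + r = Fintype.card ι) (𝔪 : {s : Finset ι // #s = r})
    (y : ∀ i : 𝔪.1, X i) : updateFinset x₀ 𝔪.1 y ∈ stage x₀ j :=
  (mem_stage_iff_card_support_le hj).2
    ((card_le_card (support_updateFinset_subset 𝔪.1 y)).trans_eq 𝔪.2)

theorem updateFinset_mem_stage_add_one (hj : j + r = Fintype.card ι)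
    {𝔪 : {s : Finset ι // #s = r}} {y : ∀ i : 𝔪.1, X i} (hy : y ∈ fatWedge (𝔪.1.restrict x₀)) :
    updateFinset x₀ 𝔪.1 y ∈ stage x₀ (j + 1) :=
  (mem_stage_add_one_iff_card_support_lt hj).2 ((card_support_updateFinset_lt hy).trans_eq 𝔪.2)

def ofSummand (hj : j + r = Fintype.card ι) (𝔪 : {s : Finset ι // #s = r}) :
    Smash (𝔪.1.restrict x₀) → StageQuotient x₀ j :=
  Collapse.lift (fun y => Collapse.mk _ ⟨_, updateFinset_mem_stage hj 𝔪 y⟩)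
    fun _ ha _ hb => Collapse.mk_eq_mk (updateFinset_mem_stage_add_one hj ha)
      (updateFinset_mem_stage_add_one hj hb)

theorem ofSummand_mk (hj : j + r = Fintype.card ι) (𝔪 : {s : Finset ι // #s = r})
    (y : ∀ i : 𝔪.1, X i) :
    ofSummand hj 𝔪 (Collapse.mk (fatWedge (𝔪.1.restrict x₀)) y) =
      Collapse.mk _ ⟨_, updateFinset_mem_stage hj 𝔪 y⟩ :=
  rfl

theorem ofSummand_basepoint (hj : j + r = Fintype.card ι) (𝔪 : {s : Finset ι // #s = r}) :
    ofSummand hj 𝔪 (Smash.basepoint _) =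
      Collapse.mk _ ⟨x₀, updateFinset_restrict (s := 𝔪.1) x₀ ▸ updateFinset_mem_stage hj 𝔪 _⟩ :=
  congrArg (Collapse.mk _) (Subtype.ext (updateFinset_restrict x₀))

def ofWedge (hj : j + r = Fintype.card ι) : SmashWedge x₀ r → StageQuotient x₀ j :=
  Wedge.desc (ofSummand hj) fun 𝔪 𝔪' =>
    (ofSummand_basepoint hj 𝔪).trans (ofSummand_basepoint hj 𝔪').symm

theorem continuous_ofWedge [∀ i, TopologicalSpace (X i)] (hj : j + r = Fintype.card ι) :
    Continuous (ofWedge (x₀ := x₀) hj) :=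
  Wedge.continuous_desc fun 𝔪 => Collapse.continuous_lift <|
    Collapse.continuous_mk.comp ((continuous_updateFinset x₀ 𝔪.1).subtype_mk _)

variable (x₀) in
noncomputable def stageQuotientHomeomorphSmashWedge [∀ i, TopologicalSpace (X i)]
    (hj : j + r = Fintype.card ι) : StageQuotient x₀ j ≃ₜ SmashWedge x₀ r where
  toFun := Collapse.lift (toWedge hj) fun a ha b hb =>
    (toWedge_eq_basepoint hj ((mem_stage_add_one_iff_card_support_lt hj).1 ha)
      (supersetOfCard hj a)).trans
      (toWedge_eq_basepoint hj ((mem_stage_add_one_iff_card_support_lt hj).1 hb) _).symm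
  invFun := ofWedge hj
  left_inv := Collapse.ind fun x => by
    rw [Collapse.lift_mk, toWedge, toSummand, ofWedge, Wedge.desc_ι, ofSummand_mk]
    exact congrArg (Collapse.mk _)
      (Subtype.ext (updateFinset_restrict_of_support_subset (support_subset_supersetOfCard hj x)))
  right_inv := Wedge.ind fun 𝔪 => Collapse.ind fun y => by
    rw [ofWedge, Wedge.desc_ι, ofSummand_mk, Collapse.lift_mk,
      toWedge_eq_toSummand hj (support_updateFinset_subset 𝔪.1 y), toSummand,
      restrict_updateFinset]
  continuous_toFun := Collapse.continuous_lift (continuous_toWedge hj)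
  continuous_invFun := continuous_ofWedge hj

end FatWedgeFiltration

/-- The fat wedge filtration of a finite product of pointed spaces: with
`S j = {x : at least j coordinates of x are the base point}`, the filtration is
decreasing, consists of closed subsets when the base points are closed, has top stage
the base point, and the successive quotients `S_{n-r}/S_{n-r+1}` are homeomorphic to
the wedge, over all `r`-element subsets `𝔪 ⊆ {1,…,n}`, of the quotients
`(∏_{i ∈ 𝔪} X_i)/S₁(𝔪)`. -/
theorem fat_wedge_filtration
    (n : ℕ) (X : Fin n → Type*) [∀ i, TopologicalSpace (X i)] (x₀ : ∀ i, X i)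
    (S : ℕ → Set (∀ i, X i))
    (hSdef : ∀ j, S j = {x | j ≤ Nat.card {i : Fin n // x i = x₀ i}}) :
    (∀ j k, j ≤ k → S k ⊆ S j) ∧
    ((∀ i, IsClosed ({x₀ i} : Set (X i))) → ∀ j, IsClosed (S j)) ∧
    (S n = {x₀}) ∧
    (∀ r, 1 ≤ r → r ≤ n →
      Nonempty (
        Collapse {y : {x : ∀ i, X i // x ∈ S (n - r)} |
            (y : ∀ i, X i) ∈ S (n - r + 1)} ≃ₜ
        Collapse {p : Σ 𝔪 : {s : Finset (Fin n) // s.card = r},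
            Collapse {y : (∀ i : {i : Fin n // i ∈ 𝔪.1}, X i.1) |
              ∃ i : {i : Fin n // i ∈ 𝔪.1}, y i = x₀ i.1} |
            p.2 = Quot.mk
              (collapseRel {y : (∀ i : {i : Fin n // i ∈ p.1.1}, X i.1) |
                ∃ i : {i : Fin n // i ∈ p.1.1}, y i = x₀ i.1})
              (fun i => x₀ i.1)})) := by
  obtain rfl : S = FatWedgeFiltration.stage x₀ := funext hSdef
  refine ⟨fun j k hjk => FatWedgeFiltration.stage_antitone x₀ hjk,
    FatWedgeFiltration.isClosed_stage, ?_, fun r _ hr => ?_⟩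
  · simpa only [Fintype.card_fin] using FatWedgeFiltration.stage_card x₀
  · exact ⟨FatWedgeFiltration.stageQuotientHomeomorphSmashWedge x₀
      (by rw [Fintype.card_fin]; omega)⟩
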